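/- arXiv:2412.07018 — 3 statements merged into one kernel-verified Lean document; each statement's English description precedes it below -/
import Mathlib

section
/- Let M be a multiplicity-free R-module of finite length. Then the lattice of submodules of M is distributive: for all submodules A, B, C of M one has A ∩ (B + C) = (A ∩ B) + (A ∩ C). -/
/-- The `i`-th composition factor (as a module) of a composition series of submodules:
the quotient of `s i.succ` by `s i.castSucc`. -/
abbrev csFactor (R : Type*) [Ring R] {M : Type*} [AddCommGroup M] [Module R M]
    (s : CompositionSeries (Submodule R M)) (i : Fin s.length) : Type _ :=
  ↥(s i.succ) ⧸ Submodule.comap (s i.succ).subtype (s i.castSucc)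

/-- A composition series of the whole module: starts at `⊥` and ends at `⊤`. -/
def IsCompSeriesOf (R : Type*) [Ring R] {M : Type*} [AddCommGroup M] [Module R M]
    (s : CompositionSeries (Submodule R M)) : Prop :=
  s.head = ⊥ ∧ s.last = ⊤

/-- The multiplicity of `S` among the factors of the composition series `s`. -/
noncomputable def multS (R : Type*) [Ring R] {M : Type*} [AddCommGroup M] [Module R M]
    (S : Type*) [AddCommGroup S] [Module R S]
    (s : CompositionSeries (Submodule R M)) : ℕ :=
  Nat.card {i : Fin s.length // Nonempty (csFactor R s i ≃ₗ[R] S)}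

/-- A composition series is multiplicity-free if its factors are pairwise non-isomorphic. -/
def MultFree (R : Type*) [Ring R] {M : Type*} [AddCommGroup M] [Module R M]
    (s : CompositionSeries (Submodule R M)) : Prop :=
  ∀ i j : Fin s.length, Nonempty (csFactor R s i ≃ₗ[R] csFactor R s j) → i = j

/-!
If the (modular) submodule lattice were not distributive, it would contain a diamond
`u < x, y, z` with pairwise meets `u` and pairwise joins equal (Birkhoff). The transpositions
`[u, x] ↗ [z, z ⊔ x] ↘ [u, y] ↗ [x, x ⊔ y]` carry a simple step `u ⋖ v ≤ x` to a simple step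
`x ⋖ w` with isomorphic quotient. A composition series of `M` through `u ⋖ v ≤ x ⋖ w` then has
the same factor at two different places, and by Jordan–Hölder so does every composition series.
-/

section Median

variable {α : Type*} [Lattice α]

def medianInf (a b c : α) : α := a ⊓ b ⊔ b ⊓ c ⊔ c ⊓ a

def medianSup (a b c : α) : α := (a ⊔ b) ⊓ (b ⊔ c) ⊓ (c ⊔ a)

theorem medianInf_rotate (a b c : α) : medianInf b c a = medianInf a b c := by
  unfold medianInf; ac_rfl

theorem medianSup_rotate (a b c : α) : medianSup b c a = medianSup a b c := by
  unfold medianSup; ac_rfl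

theorem medianInf_le_medianSup (a b c : α) : medianInf a b c ≤ medianSup a b c := by
  unfold medianInf medianSup
  refine sup_le (sup_le ?_ ?_) ?_ <;> refine le_inf (le_inf ?_ ?_) ?_ <;>
    first
    | exact inf_le_left.trans le_sup_left
    | exact inf_le_left.trans le_sup_right
    | exact inf_le_right.trans le_sup_left

theorem inf_medianSup (a b c : α) : a ⊓ medianSup a b c = a ⊓ (b ⊔ c) :=
  le_antisymm (le_inf inf_le_left (inf_le_right.trans (inf_le_left.trans inf_le_right)))
    (le_inf inf_le_left <| le_inf (le_inf (inf_le_left.trans le_sup_left) inf_le_right)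
      (inf_le_left.trans le_sup_right))

variable [IsModularLattice α]

theorem inf_medianInf (a b c : α) : a ⊓ medianInf a b c = a ⊓ b ⊔ a ⊓ c := by
  rw [medianInf, sup_right_comm, inf_comm, sup_inf_assoc_of_le _ (sup_le inf_le_left inf_le_right),
    sup_eq_left.2 ((le_inf inf_le_right (inf_le_left.trans inf_le_left)).trans le_sup_left),
    inf_comm c]

theorem inf_medianSup_sup_inf_medianSup (a b c : α) :
    a ⊓ medianSup a b c ⊔ b ⊓ medianSup a b c = medianSup a b c := by
  refine le_antisymm (sup_le inf_le_right inf_le_right) ?_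
  rw [IsModularLattice.inf_sup_inf_assoc, inf_medianSup, sup_comm,
    ← sup_inf_assoc_of_le _ (le_sup_left : b ≤ b ⊔ c), sup_comm b a]
  exact le_inf inf_le_left le_rfl

/-- Birkhoff's construction: the three rotations pairwise meet in `medianInf a b c` and join to
`medianSup a b c`, a diamond as soon as these differ. -/
def diamondVertex (a b c : α) : α := medianInf a b c ⊔ a ⊓ medianSup a b c

theorem diamondVertex_sup (a b c : α) :
    diamondVertex a b c ⊔ diamondVertex b c a = medianSup a b c := by
  rw [diamondVertex, diamondVertex, medianInf_rotate a b c, medianSup_rotate a b c]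
  refine le_antisymm ?_ ?_
  · have := medianInf_le_medianSup a b c
    exact sup_le (sup_le this inf_le_right) (sup_le this inf_le_right)
  · calc medianSup a b c = a ⊓ medianSup a b c ⊔ b ⊓ medianSup a b c :=
          (inf_medianSup_sup_inf_medianSup a b c).symm
      _ ≤ _ := sup_le_sup le_sup_right le_sup_right

theorem diamondVertex_inf (a b c : α) :
    diamondVertex a b c ⊓ diamondVertex b c a = medianInf a b c := by
  rw [diamondVertex, diamondVertex, medianInf_rotate a b c, medianSup_rotate a b c]
  refine le_antisymm ?_ (le_inf le_sup_left le_sup_left)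
  have hb : medianInf a b c ⊔ b ⊓ medianSup a b c ≤ b ⊔ c ⊓ a :=
    sup_le (sup_le (sup_le (inf_le_right.trans le_sup_left) (inf_le_left.trans le_sup_left))
      le_sup_right) (inf_le_left.trans le_sup_left)
  rw [sup_inf_assoc_of_le _ le_sup_left]
  refine sup_le le_rfl ?_
  calc a ⊓ medianSup a b c ⊓ (medianInf a b c ⊔ b ⊓ medianSup a b c)
      ≤ a ⊓ (b ⊔ c ⊓ a) := inf_le_inf inf_le_left hb
    _ = c ⊓ a ⊔ b ⊓ a := by rw [inf_comm, sup_comm, sup_inf_assoc_of_le _ inf_le_right]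
    _ ≤ medianInf a b c := sup_le le_sup_right (inf_comm b a ▸ le_sup_left.trans le_sup_left)

theorem exists_diamond_of_inf_sup_ne {a b c : α} (h : a ⊓ (b ⊔ c) ≠ a ⊓ b ⊔ a ⊓ c) :
    ∃ u x y z : α, u < x ∧ x ⊓ y = u ∧ y ⊓ z = u ∧ z ⊓ x = u ∧ z ⊔ x = z ⊔ y := by
  have hne : medianInf a b c ≠ medianSup a b c := fun e ↦ h <| by
    rw [← inf_medianSup, ← e, inf_medianInf]
  have hlx : medianInf a b c ≤ diamondVertex a b c := le_sup_left
  have hxy := diamondVertex_inf a b c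
  have hyz := diamondVertex_inf b c a
  have hzx := diamondVertex_inf c a b
  have hxy' := diamondVertex_sup a b c
  have hyz' := diamondVertex_sup b c a
  have hzx' := diamondVertex_sup c a b
  rw [medianInf_rotate a b c] at hyz
  rw [medianInf_rotate b c a, medianInf_rotate a b c] at hzx
  rw [medianSup_rotate a b c] at hyz'
  rw [medianSup_rotate b c a, medianSup_rotate a b c] at hzx'
  refine ⟨_, _, _, _, hlx.lt_of_ne fun hx ↦ hne ?_, hxy, hyz, hzx,
    by rw [hzx', sup_comm, hyz']⟩
  have hy : diamondVertex b c a = medianSup a b c := by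
    rw [← hxy', ← hx, sup_eq_right.2]; exact hyz ▸ inf_le_left
  have hz : diamondVertex c a b = medianInf a b c := by
    rw [← hyz, hy, inf_eq_right.2 (hzx' ▸ le_sup_left)]
  rw [← hzx', hz, ← hx, sup_idem]

end Median

open JordanHolderLattice

section Transposition

variable {α : Type*} [Lattice α] [IsModularLattice α]

theorem covBy_sup_iso_of_inf_eq {a b c : α} (hab : a ⊓ b = c) (hcb : c ⋖ b) :
    a ⋖ a ⊔ b ∧ Iso (c, b) (a, a ⊔ b) := by
  subst hab
  have h := covBy_sup_of_inf_covBy_right hcb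
  exact ⟨h, iso_symm (second_iso h)⟩

theorem inf_covBy_iso_of_sup_eq {a b c : α} (hab : a ⊔ b = c) (hac : a ⋖ c) :
    a ⊓ b ⋖ b ∧ Iso (a, c) (a ⊓ b, b) := by
  subst hab
  exact ⟨inf_covBy_of_covBy_sup_left hac, second_iso hac⟩

theorem exists_covBy_iso_of_diamond {u x y z v : α} (hxy : x ⊓ y = u) (hyz : y ⊓ z = u)
    (hzx : z ⊓ x = u) (hzxy : z ⊔ x = z ⊔ y) (huv : u ⋖ v) (hvx : v ≤ x) :
    ∃ w, x ⋖ w ∧ Iso (u, v) (x, w) := by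
  have hzv : z ⊓ v = u :=
    le_antisymm (hzx ▸ inf_le_inf_left z hvx) (le_inf (hyz ▸ inf_le_right) huv.le)
  obtain ⟨hz, h₁⟩ := covBy_sup_iso_of_inf_eq hzv huv
  have hzv' : z ⊔ (z ⊔ v) ⊓ y = z ⊔ v := by
    rw [inf_comm, ← sup_inf_assoc_of_le _ le_sup_left, ← hzxy,
      inf_eq_right.2 (sup_le_sup_left hvx z)]
  obtain ⟨hu, h₂⟩ := inf_covBy_iso_of_sup_eq hzv' hz
  rw [← inf_assoc, inf_sup_self, inf_comm, hyz] at hu h₂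
  have hxv : x ⊓ ((z ⊔ v) ⊓ y) = u :=
    le_antisymm (hxy ▸ inf_le_inf_left x inf_le_right) (le_inf (hzx ▸ inf_le_right) hu.le)
  obtain ⟨hx, h₃⟩ := covBy_sup_iso_of_inf_eq hxv hu
  exact ⟨_, hx, iso_trans h₁ (iso_trans h₂ h₃)⟩

end Transposition

theorem exists_ltSeries_mem_of_lt_of_le_of_lt {α : Type*} [PartialOrder α] {a b c d : α}
    (hab : a < b) (hbc : b ≤ c) (hcd : c < d) :
    ∃ p : LTSeries α, a ∈ p ∧ b ∈ p ∧ c ∈ p ∧ d ∈ p := by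
  rcases hbc.eq_or_lt with rfl | hbc
  · refine ⟨.fromListIsChain [a, b, d] (by simp) (by simp [hab, hcd]), ?_⟩
    simp [← RelSeries.mem_toList, RelSeries.toList_fromListIsChain]
  · refine ⟨.fromListIsChain [a, b, c, d] (by simp) (by simp [hab, hbc, hcd]), ?_⟩
    simp [← RelSeries.mem_toList, RelSeries.toList_fromListIsChain]

namespace CompositionSeries

variable {α : Type*} [Lattice α] [JordanHolderLattice α]

theorem exists_castSucc_eq_succ_eq_of_covBy (s : CompositionSeries α) {x y : α} (hx : x ∈ s)
    (hy : y ∈ s) (hxy : x ⋖ y) : ∃ i : Fin s.length, s i.castSucc = x ∧ s i.succ = y := by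
  obtain ⟨i, rfl⟩ := hx
  obtain ⟨j, rfl⟩ := hy
  have hij : i < j := s.strictMono.lt_iff_lt.1 hxy.lt
  obtain ⟨k, rfl⟩ := Fin.exists_castSucc_eq.2 (hij.trans_le (Fin.le_last j)).ne
  refine ⟨k, rfl, congrArg s ?_⟩
  refine (Fin.castSucc_lt_iff_succ_le.1 hij).eq_of_not_lt fun hkj ↦ ?_
  exact hxy.2 (s.strictMono (Fin.castSucc_lt_succ (i := k))) (s.strictMono hkj)

end CompositionSeries

section FiniteLength

variable {α : Type*} [Lattice α] [IsModularLattice α] [BoundedOrder α] [WellFoundedLT α]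
  [WellFoundedGT α]

theorem LTSeries.exists_compositionSeries_superset (p : LTSeries α) :
    ∃ s : CompositionSeries α, s.head = ⊥ ∧ s.last = ⊤ ∧ ∀ x ∈ p, x ∈ s := by
  obtain ⟨s, i, hi, hs₀, hs₁⟩ := p.exists_relSeries_covBy_and_head_eq_bot_and_last_eq_bot
  refine ⟨s, hs₀, hs₁, ?_⟩
  rintro _ ⟨k, rfl⟩
  exact ⟨i k, congrFun hi k⟩

theorem not_iso_of_covBy_of_le_of_covBy (s : CompositionSeries α) (hs₀ : s.head = ⊥)
    (hs₁ : s.last = ⊤)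
    (hs : ∀ i j : Fin s.length, Iso (s i.castSucc, s i.succ) (s j.castSucc, s j.succ) → i = j)
    {a b c d : α} (hab : a ⋖ b) (hbc : b ≤ c) (hcd : c ⋖ d) : ¬ Iso (a, b) (c, d) := by
  intro h
  obtain ⟨p, ha, hb, hc, hd⟩ := exists_ltSeries_mem_of_lt_of_le_of_lt hab.lt hbc hcd.lt
  obtain ⟨t, ht₀, ht₁, hpt⟩ := p.exists_compositionSeries_superset
  obtain ⟨i, hia, hib⟩ := t.exists_castSucc_eq_succ_eq_of_covBy (hpt a ha) (hpt b hb) hab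
  obtain ⟨j, hjc, hjd⟩ := t.exists_castSucc_eq_succ_eq_of_covBy (hpt c hc) (hpt d hd) hcd
  obtain ⟨f, hf⟩ := CompositionSeries.jordan_holder t s (ht₀.trans hs₀.symm) (ht₁.trans hs₁.symm)
  have hfij : f i = f j := hs _ _ <| iso_trans (iso_symm (hf i)) <|
    iso_trans (by rwa [hia, hib, hjc, hjd]) (hf j)
  obtain rfl := f.injective hfij
  exact (hab.lt.trans_le hbc).ne (hia.symm.trans hjc)

theorem inf_sup_eq_of_compositionSeries (s : CompositionSeries α) (hs₀ : s.head = ⊥)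
    (hs₁ : s.last = ⊤)
    (hs : ∀ i j : Fin s.length, Iso (s i.castSucc, s i.succ) (s j.castSucc, s j.succ) → i = j)
    (a b c : α) : a ⊓ (b ⊔ c) = a ⊓ b ⊔ a ⊓ c := by
  by_contra h
  obtain ⟨u, x, y, z, hux, hxy, hyz, hzx, hzxy⟩ := exists_diamond_of_inf_sup_ne h
  obtain ⟨v, huv, hvx⟩ := exists_covBy_le_of_lt hux
  obtain ⟨w, hxw, hiso⟩ := exists_covBy_iso_of_diamond hxy hyz hzx hzxy huv hvx
  exact not_iso_of_covBy_of_le_of_covBy s hs₀ hs₁ hs huv hvx hxw hiso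

end FiniteLength

theorem stmt5 {R M : Type*} [Ring R] [AddCommGroup M] [Module R M]
    (sM : CompositionSeries (Submodule R M)) (hsM : IsCompSeriesOf R sM)
    (hmf : MultFree R sM)
    (A B C : Submodule R M) :
    A ⊓ (B ⊔ C) = (A ⊓ B) ⊔ (A ⊓ C) := by
  obtain ⟨_, _⟩ := isFiniteLength_iff_isNoetherian_isArtinian.mp
    (isFiniteLength_of_exists_compositionSeries ⟨sM, hsM⟩)
  exact inf_sup_eq_of_compositionSeries sM hsM.1 hsM.2 (fun i j h ↦ hmf i j ⟨h.linearEquiv⟩) A B C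
end

section
/- Let P be an R-module of finite length whose cosocle is simple, i.e., P has a unique maximal proper submodule M. Suppose P embeds in a multiplicity-free finite length module C, that Q is another submodule of C, and that every composition factor of M is isomorphic to a composition factor of Q. Then the image of M in C is contained in Q; in particular M embeds into Q. -/
open Submodule

section Lattice

variable {X : Type*} [Lattice X] [IsModularLattice X] [WellFoundedLT X] [WellFoundedGT X]

theorem exists_compositionSeries_of_le {a b : X} (hab : a ≤ b) :
    ∃ s : CompositionSeries X, s.head = a ∧ s.last = b := by
  obtain ⟨f, hf₀, n, hfn, hf⟩ := exists_covBy_seq_of_wellFoundedLT_wellFoundedGT_of_le hab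
  exact ⟨⟨n, fun i ↦ f i, fun i ↦ hf i i.2⟩, hf₀, hfn⟩

theorem exists_compositionSeries_of_covBy {a x y b : X} (hax : a ≤ x) (hxy : x ⋖ y)
    (hyb : y ≤ b) :
    ∃ s : CompositionSeries X, s.head = a ∧ s.last = b ∧
      ∃ i : Fin s.length, s i.castSucc = x ∧ s i.succ = y := by
  obtain ⟨u, rfl, rfl⟩ := exists_compositionSeries_of_le hax
  obtain ⟨w, hw, rfl⟩ := exists_compositionSeries_of_le hyb
  have hconn : (u.snoc y hxy).last = w.head := (RelSeries.last_snoc ..).trans hw.symm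
  refine ⟨(u.snoc y hxy).smash w hconn, by simp, by simp, Fin.castAdd _ (Fin.last _), ?_, ?_⟩
  · exact (RelSeries.smash_castAdd hconn _).trans (RelSeries.snoc_castSucc ..)
  · exact (RelSeries.smash_succ_castAdd hconn _).trans (RelSeries.last_snoc ..)

end Lattice

section Module

variable {R : Type*} [Ring R] {M C : Type*} [AddCommGroup M] [Module R M]
  [AddCommGroup C] [Module R C]

/-- `y / x`; `csFactor R s i` is definitionally `subquotient (s i.castSucc) (s i.succ)`. -/
abbrev subquotient (x y : Submodule R M) : Type _ :=
  ↥y ⧸ x.comap y.subtype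

noncomputable def subquotientComapEquiv (f : M →ₗ[R] C) {x y : Submodule R C} (hxy : x ≤ y)
    (hy : y ≤ x ⊔ LinearMap.range f) :
    subquotient (x.comap f) (y.comap f) ≃ₗ[R] subquotient x y :=
  let φ : y.comap f →ₗ[R] subquotient x y :=
    (mkQ _).comp (f.restrict fun _ ha ↦ ha)
  have hφ : Function.Surjective φ := by
    intro q
    obtain ⟨⟨b, hb⟩, rfl⟩ := mkQ_surjective _ q
    obtain ⟨x₀, hx₀, _, ⟨a, rfl⟩, rfl⟩ := mem_sup.mp (hy hb)
    have ha : f a ∈ y := by simpa using y.sub_mem hb (hxy hx₀)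
    refine ⟨⟨a, ha⟩, (Submodule.Quotient.eq _).mpr ?_⟩
    simpa using x.neg_mem hx₀
  have hker : LinearMap.ker φ = (x.comap f).comap (y.comap f).subtype := by
    ext
    simp [φ, Quotient.mk_eq_zero]
  (quotEquivOfEq _ _ hker.symm).trans (φ.quotKerEquivOfSurjective hφ)

noncomputable def subquotientMapEquiv {f : M →ₗ[R] C} (hf : Function.Injective f)
    {x y : Submodule R M} (hxy : x ≤ y) :
    subquotient (x.map f) (y.map f) ≃ₗ[R] subquotient x y := by
  have e := subquotientComapEquiv f (map_mono hxy) (LinearMap.map_le_range.trans le_sup_right)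
  rw [comap_map_eq_of_injective hf, comap_map_eq_of_injective hf] at e
  exact e.symm

theorem comap_covBy_comap_iff (f : M →ₗ[R] C) {x y : Submodule R C} (hxy : x ≤ y)
    (hy : y ≤ x ⊔ LinearMap.range f) : x.comap f ⋖ y.comap f ↔ x ⋖ y := by
  rw [covBy_iff_quot_is_simple hxy, covBy_iff_quot_is_simple (comap_mono hxy)]
  have e := subquotientComapEquiv f hxy hy
  exact ⟨fun _ ↦ IsSimpleModule.congr e.symm, fun _ ↦ IsSimpleModule.congr e⟩

theorem IsCompSeriesOf.isNoetherian_isArtinian {s : CompositionSeries (Submodule R M)}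
    (hs : IsCompSeriesOf R s) : IsNoetherian R M ∧ IsArtinian R M :=
  isFiniteLength_iff_isNoetherian_isArtinian.mp <|
    isFiniteLength_of_exists_compositionSeries ⟨s, hs⟩

theorem IsCompSeriesOf.exists_csFactor_equiv_of_covBy {s : CompositionSeries (Submodule R M)}
    (hs : IsCompSeriesOf R s) {x y : Submodule R M} (hxy : x ⋖ y) :
    ∃ i, Nonempty (subquotient x y ≃ₗ[R] csFactor R s i) := by
  obtain ⟨_, _⟩ := hs.isNoetherian_isArtinian
  obtain ⟨t, ht₀, ht₁, j, rfl, rfl⟩ := exists_compositionSeries_of_covBy bot_le hxy le_top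
  obtain ⟨e, he⟩ := t.jordan_holder s (ht₀.trans hs.1.symm) (ht₁.trans hs.2.symm)
  exact ⟨e j, ⟨(he j).linearEquiv⟩⟩

theorem MultFree.of_equivalent {s t : CompositionSeries (Submodule R M)} (hs : MultFree R s)
    (h : t.Equivalent s) : MultFree R t := by
  obtain ⟨e, he⟩ := h
  rintro i j ⟨φ⟩
  exact e.injective (hs _ _ ⟨(he i).linearEquiv.symm.trans (φ.trans (he j).linearEquiv)⟩)

theorem MultFree.eq_of_subquotient_equiv {s : CompositionSeries (Submodule R M)}
    (hmf : MultFree R s) {i j : Fin s.length} {x y x' y' : Submodule R M}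
    (hx : s i.castSucc = x) (hy : s i.succ = y) (hx' : s j.castSucc = x') (hy' : s j.succ = y')
    (h : Nonempty (subquotient x y ≃ₗ[R] subquotient x' y')) : i = j := by
  subst hx hy hx' hy'
  exact hmf i j h

theorem MultFree.isEmpty_subquotient_equiv {s : CompositionSeries (Submodule R M)}
    (hmf : MultFree R s) (hs : IsCompSeriesOf R s) {x y x' y' : Submodule R M} (hxy : x ⋖ y)
    (hxy' : x' ⋖ y') (hyx' : y ≤ x') :
    IsEmpty (subquotient x y ≃ₗ[R] subquotient x' y') := by
  obtain ⟨_, _⟩ := hs.isNoetherian_isArtinian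
  obtain ⟨t₁, ht₁, rfl, i, hi₀, hi₁⟩ := exists_compositionSeries_of_covBy bot_le hxy le_rfl
  obtain ⟨t₂, ht₂, ht₂', i', hi₀', hi₁'⟩ := exists_compositionSeries_of_covBy hyx' hxy' le_top
  have hmf' : MultFree R (t₁.smash t₂ ht₂.symm) :=
    hmf.of_equivalent (CompositionSeries.jordan_holder _ s (by simp [ht₁, hs.1])
      (by simp [ht₂', hs.2]))
  refine ⟨fun φ ↦ ?_⟩
  have hii' := hmf'.eq_of_subquotient_equiv ((RelSeries.smash_castAdd _ i).trans hi₀)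
    ((RelSeries.smash_succ_castAdd _ i).trans hi₁) ((RelSeries.smash_natAdd _ i').trans hi₀')
    ((RelSeries.smash_succ_natAdd _ i').trans hi₁') ⟨φ⟩
  have := congrArg Fin.val hii'
  simp only [Fin.val_castAdd, Fin.val_natAdd] at this
  omega

theorem MultFree.range_le_of_forall_csFactor_equiv {s : CompositionSeries (Submodule R C)}
    (hmf : MultFree R s) (hs : IsCompSeriesOf R s) (f : M →ₗ[R] C) (Q : Submodule R C)
    (sM : CompositionSeries (Submodule R M)) (hsM : IsCompSeriesOf R sM)
    (sQ : CompositionSeries (Submodule R Q))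
    (h : ∀ i, ∃ j, Nonempty (csFactor R sM i ≃ₗ[R] csFactor R sQ j)) :
    LinearMap.range f ≤ Q := by
  by_contra hfQ
  obtain ⟨_, _⟩ := hs.isNoetherian_isArtinian
  obtain ⟨K, hQK, hK⟩ := exists_le_covBy_of_lt (left_lt_sup.mpr hfQ)
  have hfK : ¬LinearMap.range f ≤ K := fun hfK ↦ hK.lt.not_ge (sup_le hQK hfK)
  have hsup : K ⊔ LinearMap.range f = Q ⊔ LinearMap.range f :=
    (hK.eq_or_eq le_sup_left (sup_le hK.le le_sup_right)).resolve_left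
      fun hKf ↦ hfK (sup_eq_left.mp hKf)
  have hKf : K ⋖ K ⊔ LinearMap.range f := hsup ▸ hK
  obtain ⟨i, ⟨φM⟩⟩ := hsM.exists_csFactor_equiv_of_covBy
    ((comap_covBy_comap_iff f le_sup_left le_rfl).mpr hKf)
  obtain ⟨j, ⟨φQ⟩⟩ := h i
  have hQstep := map_covBy_of_injective Q.injective_subtype (sQ.step j)
  refine (hmf.isEmpty_subquotient_equiv hs hQstep hKf
    (map_subtype_le _ _ |>.trans hQK)).false ?_
  exact (subquotientMapEquiv Q.injective_subtype (sQ.step j).le).trans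
    (φQ.symm.trans (φM.symm.trans (subquotientComapEquiv f le_sup_left le_rfl)))

end Module

theorem stmt10_general {R P C : Type*} [Ring R] [AddCommGroup P] [Module R P]
    [AddCommGroup C] [Module R C]
    (M₀ : Submodule R P)
    (ι : P →ₗ[R] C)
    (sC : CompositionSeries (Submodule R C)) (hsC : IsCompSeriesOf R sC)
    (hmf : MultFree R sC)
    (Q : Submodule R C)
    (sM : CompositionSeries (Submodule R ↥M₀)) (hsM : IsCompSeriesOf R sM)
    (sQ : CompositionSeries (Submodule R ↥Q))
    (h : ∀ i : Fin sM.length, ∃ j : Fin sQ.length,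
      Nonempty (csFactor R sM i ≃ₗ[R] csFactor R sQ j)) :
    M₀.map ι ≤ Q := by
  rw [← M₀.range_subtype, ← LinearMap.range_comp]
  exact hmf.range_le_of_forall_csFactor_equiv hsC _ Q sM hsM sQ h

theorem stmt10 {R P C : Type*} [Ring R] [AddCommGroup P] [Module R P]
    [AddCommGroup C] [Module R C]
    (hP : IsFiniteLength R P)
    (M₀ : Submodule R P) (hM₀ : M₀ ≠ ⊤) (hmax : ∀ N : Submodule R P, N ≠ ⊤ → N ≤ M₀)
    (ι : P →ₗ[R] C) (hι : Function.Injective ι)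
    (sC : CompositionSeries (Submodule R C)) (hsC : IsCompSeriesOf R sC)
    (hmf : MultFree R sC)
    (Q : Submodule R C)
    (sM : CompositionSeries (Submodule R ↥M₀)) (hsM : IsCompSeriesOf R sM)
    (sQ : CompositionSeries (Submodule R ↥Q)) (hsQ : IsCompSeriesOf R sQ)
    (h : ∀ i : Fin sM.length, ∃ j : Fin sQ.length,
      Nonempty (csFactor R sM i ≃ₗ[R] csFactor R sQ j)) :
    M₀.map ι ≤ Q :=
  stmt10_general M₀ ι sC hsC hmf Q sM hsM sQ h
end

section
/- Let M be an R-module of finite length, and let V₂ ⊆ M be a submodule. Suppose U, W ⊆ M are submodules with V₂ ⊆ U and V₂ ⊆ W, that U/V₂ is simple, that U/V₂ is not isomorphic to any composition factor of W/V₂, and that U/V₂ occurs with multiplicity one as a composition factor of M/V₂. Then the submodule (U + W)/V₂ of M/V₂ is isomorphic to (U/V₂) ⊕ (W/V₂). -/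
/-- A simple submodule of a module with a full composition series is isomorphic to some
composition factor. -/
theorem exists_factor_equiv {R N : Type*} [Ring R] [AddCommGroup N] [Module R N]
    (s : CompositionSeries (Submodule R N)) (h0 : s.head = ⊥) (h1 : s.last = ⊤)
    (S : Submodule R N) (hS : IsSimpleModule R ↥S) :
    ∃ i : Fin s.length, Nonempty (csFactor R s i ≃ₗ[R] ↥S) := by
  have hSne : S ≠ ⊥ := by
    intro h
    have : Nontrivial ↥S := hS.nontrivial
    rw [h] at this
    exact (not_nontrivial _) this
  have hex : ∃ k : ℕ, ∃ h : k < s.length + 1, S ≤ s ⟨k, h⟩ := by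
    refine ⟨s.length, Nat.lt_succ_self _, ?_⟩
    have : s ⟨s.length, Nat.lt_succ_self _⟩ = s.last := rfl
    rw [this, h1]
    exact le_top
  classical
  let k := Nat.find hex
  obtain ⟨hk, hle⟩ := Nat.find_spec hex
  have hkne : k ≠ 0 := by
    intro h
    have : S ≤ s ⟨0, Nat.succ_pos _⟩ := by
      have := Nat.find_spec hex
      rw [show (⟨0, Nat.succ_pos _⟩ : Fin (s.length + 1)) = ⟨k, hk⟩ by
        simp [h]]
      exact hle
    have h0' : s ⟨0, Nat.succ_pos _⟩ = s.head := rfl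
    rw [h0', h0, le_bot_iff] at this
    exact hSne this
  obtain ⟨m, hm⟩ : ∃ m, k = m + 1 := ⟨k - 1, (Nat.succ_pred_eq_of_pos (Nat.pos_of_ne_zero hkne)).symm⟩
  have hmlt : m < s.length := by omega
  set i : Fin s.length := ⟨m, hmlt⟩ with hi
  have hsucc : (i.succ : Fin (s.length + 1)) = ⟨k, hk⟩ := by
    simp [hi, Fin.succ, hm]
  have hScast : ¬ S ≤ s i.castSucc := by
    intro h
    have := Nat.find_min hex (m := m) (by omega)
    exact this ⟨by omega, h⟩
  have hSle : S ≤ s i.succ := by rw [hsucc]; exact hle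
  -- the factor is simple
  have hstep : s i.castSucc ⋖ s i.succ := s.step i
  have hfac : IsSimpleModule R (csFactor R s i) :=
    (covBy_iff_quot_is_simple hstep.le).mp hstep
  -- the map from S to the factor
  let f : ↥S →ₗ[R] csFactor R s i :=
    (Submodule.mkQ _).comp (Submodule.inclusion hSle)
  have hker : LinearMap.ker f = ⊥ := by
    rcases hS.eq_bot_or_eq_top (LinearMap.ker f) with h | h
    · exact h
    · exfalso
      apply hScast
      intro x hx
      have : (⟨x, hx⟩ : ↥S) ∈ LinearMap.ker f := h ▸ Submodule.mem_top
      have : Submodule.inclusion hSle ⟨x, hx⟩ ∈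
          Submodule.comap (s i.succ).subtype (s i.castSucc) := by
        rwa [LinearMap.mem_ker, LinearMap.comp_apply, Submodule.mkQ_apply, Submodule.Quotient.mk_eq_zero] at this
      exact this
  have hinj : Function.Injective f := LinearMap.ker_eq_bot.mp hker
  have hrange : LinearMap.range f = ⊤ := by
    rcases hfac.eq_bot_or_eq_top (LinearMap.range f) with h | h
    · exfalso
      have : Nontrivial ↥S := hS.nontrivial
      obtain ⟨x, hx⟩ := exists_ne (0 : ↥S)
      apply hx
      apply hinj
      have : f x ∈ LinearMap.range f := ⟨x, rfl⟩
      rw [h, Submodule.mem_bot] at this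
      simp [this]
    · exact h
  exact ⟨i, ⟨((LinearEquiv.ofInjective f hinj).trans
    ((LinearEquiv.ofEq _ _ hrange).trans Submodule.topEquiv)).symm⟩⟩

/-- Disjoint submodules: sup is isomorphic to the product. -/
theorem sup_equiv_prod {R N : Type*} [Ring R] [AddCommGroup N] [Module R N]
    (p q : Submodule R N) (h : Disjoint p q) :
    Nonempty (↥(p ⊔ q) ≃ₗ[R] ↥p × ↥q) := by
  let f := p.subtype.coprod q.subtype
  have hker : LinearMap.ker f = ⊥ := by
    rw [LinearMap.ker_coprod_of_disjoint_range]
    · simp [Submodule.ker_subtype]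
    · simpa [Submodule.range_subtype] using h
  have hinj : Function.Injective f := LinearMap.ker_eq_bot.mp hker
  exact ⟨(LinearEquiv.ofEq _ _ (Submodule.sup_eq_range p q)).trans
    (LinearEquiv.ofInjective f hinj).symm⟩

theorem stmt11 {R M : Type*} [Ring R] [AddCommGroup M] [Module R M]
    (hfl : IsFiniteLength R M)
    (V₂ U W : Submodule R M) (hUV : V₂ ≤ U) (hWV : V₂ ≤ W)
    (hsimple : IsSimpleModule R ↥(U.map V₂.mkQ))
    (sW : CompositionSeries (Submodule R ↥(W.map V₂.mkQ))) (hsW : IsCompSeriesOf R sW)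
    (hdisj : ∀ j : Fin sW.length,
      ¬ Nonempty (csFactor R sW j ≃ₗ[R] ↥(U.map V₂.mkQ)))
    (sQ : CompositionSeries (Submodule R (M ⧸ V₂))) (hsQ : IsCompSeriesOf R sQ)
    (hone : multS R (↥(U.map V₂.mkQ)) sQ = 1) :
    Nonempty (↥((U ⊔ W).map V₂.mkQ) ≃ₗ[R] ↥(U.map V₂.mkQ) × ↥(W.map V₂.mkQ)) := by
  let U' := U.map V₂.mkQ
  let W' := W.map V₂.mkQ
  have hAtom : IsAtom U' := isSimpleModule_iff_isAtom.mp hsimple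
  have hd : Disjoint U' W' := by
    by_contra hnd
    have hne : U' ⊓ W' ≠ ⊥ := by
      intro h
      exact hnd (disjoint_iff.mpr h)
    have hUleW : U' ≤ W' := by
      rcases lt_or_eq_of_le (inf_le_left : U' ⊓ W' ≤ U') with h | h
      · exact absurd (hAtom.2 _ h) hne
      · rw [← h]; exact inf_le_right
    -- U' is a simple submodule of W', so it is iso to a factor of sW
    set S : Submodule R ↥W' := U'.comap W'.subtype with hs
    have hequiv : ↥S ≃ₗ[R] ↥U' := Submodule.comapSubtypeEquivOfLe hUleW
    have hSsimple : IsSimpleModule R ↥S := IsSimpleModule.congr hequiv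
    obtain ⟨j, ⟨e⟩⟩ := exists_factor_equiv sW hsW.1 hsW.2 S hSsimple
    exact hdisj j ⟨e.trans hequiv⟩
  have hmap : (U ⊔ W).map V₂.mkQ = U' ⊔ W' := Submodule.map_sup U W V₂.mkQ
  obtain ⟨e⟩ := sup_equiv_prod U' W' hd
  exact ⟨(LinearEquiv.ofEq _ _ hmap).trans e⟩
end
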